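/- arXiv:2605.21077 — 4 statements merged into one kernel-verified Lean document; each statement's English description precedes it below -/
import Mathlib

section
/- For every 3×3 matrix X with all entries in {+1, -1}, the permanent of X is nonzero. -/
/-- The permanent of a square matrix. -/
def Matrix.per {m : Type*} [Fintype m] [DecidableEq m] {R : Type*} [CommRing R]
    (A : Matrix m m R) : R :=
  ∑ σ : Equiv.Perm m, ∏ i, A i (σ i)

private lemma sign_mul3 {a b c : ℤ} (ha : a = 1 ∨ a = -1) (hb : b = 1 ∨ b = -1)
    (hc : c = 1 ∨ c = -1) : a * b * c = 1 ∨ a * b * c = -1 := by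
  rcases ha with h|h <;> rcases hb with h'|h' <;> rcases hc with h''|h'' <;>
    subst h h' h'' <;> norm_num

theorem per_sign_matrix_ne_zero (X : Matrix (Fin 3) (Fin 3) ℤ)
    (hX : ∀ i j, X i j = 1 ∨ X i j = -1) :
    Matrix.per X ≠ 0 := by
  have hper : Matrix.per X = X 0 0 * X 1 1 * X 2 2 + X 0 0 * X 1 2 * X 2 1
      + X 0 1 * X 1 0 * X 2 2 + X 0 1 * X 1 2 * X 2 0
      + X 0 2 * X 1 0 * X 2 1 + X 0 2 * X 1 1 * X 2 0 := by
    have huniv : (Finset.univ : Finset (Equiv.Perm (Fin 3))) =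
        {1, Equiv.swap 0 1, Equiv.swap 0 2, Equiv.swap 1 2,
         Equiv.swap 0 1 * Equiv.swap 1 2, Equiv.swap 0 2 * Equiv.swap 1 2} := by decide
    rw [Matrix.per, huniv]
    rw [Finset.sum_insert (by decide), Finset.sum_insert (by decide),
      Finset.sum_insert (by decide), Finset.sum_insert (by decide),
      Finset.sum_insert (by decide), Finset.sum_singleton]
    simp [Fin.prod_univ_three, Equiv.swap_apply_of_ne_of_ne, Equiv.Perm.mul_apply]
    ring
  have hsq : ∀ i j, X i j * X i j = 1 := fun i j => by
    rcases hX i j with h|h <;> rw [h] <;> norm_num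
  set t1 := X 0 0 * X 1 1 * X 2 2 with ht1
  set t2 := X 0 0 * X 1 2 * X 2 1 with ht2
  set t3 := X 0 1 * X 1 0 * X 2 2 with ht3
  set t4 := X 0 1 * X 1 2 * X 2 0 with ht4
  set t5 := X 0 2 * X 1 0 * X 2 1 with ht5
  set t6 := X 0 2 * X 1 1 * X 2 0 with ht6
  have hprod : t1 * t2 * t3 * t4 * t5 * t6 = 1 := by
    calc t1 * t2 * t3 * t4 * t5 * t6
        = (X 0 0 * X 0 0) * (X 0 1 * X 0 1) * (X 0 2 * X 0 2) * (X 1 0 * X 1 0)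
          * (X 1 1 * X 1 1) * (X 1 2 * X 1 2) * (X 2 0 * X 2 0) * (X 2 1 * X 2 1)
          * (X 2 2 * X 2 2) := by rw [ht1, ht2, ht3, ht4, ht5, ht6]; ring
      _ = 1 := by simp only [hsq]; norm_num
  have h1 := sign_mul3 (hX 0 0) (hX 1 1) (hX 2 2)
  have h2 := sign_mul3 (hX 0 0) (hX 1 2) (hX 2 1)
  have h3 := sign_mul3 (hX 0 1) (hX 1 0) (hX 2 2)
  have h4 := sign_mul3 (hX 0 1) (hX 1 2) (hX 2 0)
  have h5 := sign_mul3 (hX 0 2) (hX 1 0) (hX 2 1)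
  have h6 := sign_mul3 (hX 0 2) (hX 1 1) (hX 2 0)
  rw [hper]
  rcases h1 with h|h <;> rw [← ht1] at h <;> rcases h2 with h'|h' <;> rw [← ht2] at h' <;>
    rcases h3 with h3|h3 <;> rw [← ht3] at h3 <;> rcases h4 with h4|h4 <;> rw [← ht4] at h4 <;>
    rcases h5 with h5|h5 <;> rw [← ht5] at h5 <;> rcases h6 with h6|h6 <;> rw [← ht6] at h6 <;>
    rw [h, h', h3, h4, h5, h6] at hprod ⊢ <;> norm_num at hprod <;> norm_num
end

section
/- Let r ≥ 1 and suppose that there exist real coefficients c_1,…,c_k and 3r×3r sign matrices S_1,…,S_k such that per(X) = Σ_{i=1}^k c_i · det(S_i ∘ X) holds for every block diagonal matrix X = X_1 ⊕ ⋯ ⊕ X_r with each X_j a 3×3 sign matrix. Then k ≥ (8/3)^r. -/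
/-- The block diagonal matrix with `r` blocks of size `3 × 3`. -/
def blockDiag3 {R : Type*} [CommRing R] {r : ℕ} (X : Fin r → Matrix (Fin 3) (Fin 3) R) :
    Matrix (Fin (3 * r)) (Fin (3 * r)) R := fun i j =>
  if (i : ℕ) / 3 = (j : ℕ) / 3 then
    X ⟨(i : ℕ) / 3, by have := i.isLt; omega⟩
      ⟨(i : ℕ) % 3, by omega⟩ ⟨(j : ℕ) % 3, by omega⟩
  else 0

namespace BlockAmp
open Matrix Equiv Finset

def sz (b : Bool) : ℤ := if b then 1 else -1
def lam : Fin 6 → ℤ := ![1,1,1,1,-1,-1]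

theorem card_even : (Finset.univ.filter (fun be : Fin 6 → Bool => (∏ t, sz (be t)) = 1)).card = 32 := by decide

theorem count20 : ∀ bd : Fin 6 → Bool, (∏ t, sz (bd t)) = -1 →
    (Finset.univ.filter (fun be : Fin 6 → Bool =>
      (∏ t, sz (be t)) = 1 ∧ (∑ t, lam t * sz (be t) * sz (bd t)) = 0)).card = 20 := by decide

theorem adm : ∀ be : Fin 6 → Bool, (∏ t, sz (be t)) = 1 → (∑ t, lam t * sz (be t)) ≠ 0 := by decide

theorem core (r : ℕ) {I : Type} [DecidableEq I] (A : Finset I) (c : I → ℝ)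
    (d : I → Fin r → Fin 6 → ℝ)
    (hpm : ∀ i ∈ A, ∀ j t, d i j t = 1 ∨ d i j t = -1)
    (hodd : ∀ i ∈ A, ∀ j, (∏ t, d i j t) = -1)
    (heq : ∀ σ : Fin r → Fin 6, ∑ i ∈ A, c i * ∏ j, d i j (σ j) = 1) :
    8 ^ r ≤ 3 ^ r * A.card := by
  classical
  induction r generalizing A c with
  | zero =>
    have h0 := heq (fun j => j.elim0)
    simp only [Finset.univ_eq_empty, Finset.prod_empty, mul_one] at h0
    have : A.Nonempty := by
      by_contra hA
      rw [Finset.not_nonempty_iff_eq_empty] at hA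
      simp [hA] at h0
    simpa using Finset.card_pos.mpr this
  | succ r IH =>
    -- boolean version of last-coordinate vectors
    set dl : I → Fin 6 → ℝ := fun i => d i (Fin.last r) with hdl
    set bd : I → Fin 6 → Bool := fun i t => if dl i t = 1 then true else false with hbd
    have hcast : ∀ i ∈ A, ∀ t, dl i t = ((sz (bd i t) : ℤ) : ℝ) := by
      intro i hi t
      rcases hpm i hi (Fin.last r) t with h1 | h1
      · simp [hbd, sz, hdl, h1]
      · have hne : dl i t ≠ 1 := by simp only [hdl]; rw [h1]; norm_num
        simp only [hbd, if_neg hne, sz, if_false]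
        simp only [hdl]; rw [h1]; norm_num
    have hparity : ∀ i ∈ A, (∏ t, sz (bd i t)) = -1 := by
      intro i hi
      have : ((∏ t, sz (bd i t) : ℤ) : ℝ) = ((-1 : ℤ) : ℝ) := by
        push_cast
        rw [← hodd i hi (Fin.last r)]
        exact Finset.prod_congr rfl fun t _ => (hcast i hi t).symm
      exact_mod_cast this
    -- the set of even sign vectors
    set E : Finset (Fin 6 → Bool) :=
      Finset.univ.filter (fun be => (∏ t, sz (be t)) = 1) with hE
    -- kill predicate
    set K : (Fin 6 → Bool) → I → Prop :=
      fun be i => (∑ t, lam t * sz (be t) * sz (bd i t)) = 0 with hK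
    -- double counting
    have hdc : ∑ be ∈ E, (A.filter (K be)).card = 20 * A.card := by
      have h1 : ∀ be, (A.filter (K be)).card = ∑ i ∈ A, if K be i then 1 else 0 := by
        intro be; rw [Finset.card_filter]
      have h2 : ∀ i ∈ A, (E.filter (fun be => K be i)).card = 20 := by
        intro i hi
        rw [hE, Finset.filter_filter]
        exact count20 (bd i) (hparity i hi)
      calc ∑ be ∈ E, (A.filter (K be)).card
          = ∑ be ∈ E, ∑ i ∈ A, (if K be i then 1 else 0) := by
            exact Finset.sum_congr rfl fun be _ => h1 be
        _ = ∑ i ∈ A, ∑ be ∈ E, (if K be i then 1 else 0) := Finset.sum_comm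
        _ = ∑ i ∈ A, (E.filter (fun be => K be i)).card := by
            exact Finset.sum_congr rfl fun i _ => (Finset.card_filter _ _).symm
        _ = ∑ i ∈ A, 20 := Finset.sum_congr rfl h2
        _ = 20 * A.card := by rw [Finset.sum_const]; ring
    -- find a good be₀
    have hEcard : E.card = 32 := card_even
    have hex : ∃ be₀ ∈ E, 20 * A.card ≤ 32 * (A.filter (K be₀)).card := by
      by_contra hcon
      push_neg at hcon
      have hlt : ∑ be ∈ E, 32 * (A.filter (K be)).card < ∑ be ∈ E, 20 * A.card := by
        apply Finset.sum_lt_sum_of_nonempty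
        · rw [← Finset.card_pos, hEcard]; norm_num
        · exact hcon
      rw [← Finset.mul_sum, hdc, Finset.sum_const, hEcard, smul_eq_mul] at hlt
      omega
    obtain ⟨be₀, hbe₀E, hbe₀⟩ := hex
    have heven : (∏ t, sz (be₀ t)) = 1 := by
      rw [hE, Finset.mem_filter] at hbe₀E; exact hbe₀E.2
    set A' : Finset I := A.filter (fun i => ¬ K be₀ i) with hA'
    have hcards : (A.filter (K be₀)).card + A'.card = A.card :=
      Finset.card_filter_add_card_filter_not _
    have hcard' : 8 * A'.card ≤ 3 * A.card := by omega
    -- nonzero normalizing constant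
    set Lz : ℤ := ∑ t, lam t * sz (be₀ t) with hLz
    have hLne : Lz ≠ 0 := adm be₀ heven
    have hLneR : (Lz : ℝ) ≠ 0 := Int.cast_ne_zero.mpr hLne
    -- weights
    set W : I → ℝ := fun i => ∑ t, ((lam t * sz (be₀ t) : ℤ) : ℝ) * dl i t with hW
    have hWK : ∀ i ∈ A, K be₀ i → W i = 0 := by
      intro i hi hk
      have : W i = ((∑ t, lam t * sz (be₀ t) * sz (bd i t) : ℤ) : ℝ) := by
        rw [hW, Int.cast_sum]
        exact Finset.sum_congr rfl fun t _ => by rw [hcast i hi t]; push_cast; ring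
      rw [this, hk]; norm_num
    -- new equation
    have heq' : ∀ σ : Fin r → Fin 6,
        ∑ i ∈ A', (c i * W i / (Lz : ℝ)) * ∏ j, d i j.castSucc (σ j) = 1 := by
      intro σ
      set P : I → ℝ := fun i => ∏ j, d i j.castSucc (σ j) with hP
      have hsnoc : ∀ τ : Fin 6,
          ∑ i ∈ A, c i * (P i * dl i τ) = 1 := by
        intro τ
        have h2 := heq (Fin.snoc σ τ)
        simp only [Fin.prod_univ_castSucc, Fin.snoc_castSucc, Fin.snoc_last] at h2
        exact h2
      have hsum : ∑ i ∈ A, c i * P i * W i = (Lz : ℝ) := by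
        have step1 : ∀ i, c i * P i * W i
            = ∑ τ, ((lam τ * sz (be₀ τ) : ℤ) : ℝ) * (c i * (P i * dl i τ)) := by
          intro i
          rw [hW, Finset.mul_sum]
          exact Finset.sum_congr rfl fun τ _ => by ring
        calc ∑ i ∈ A, c i * P i * W i
            = ∑ i ∈ A, ∑ τ, ((lam τ * sz (be₀ τ) : ℤ) : ℝ) * (c i * (P i * dl i τ)) :=
              Finset.sum_congr rfl fun i _ => step1 i
          _ = ∑ τ, ∑ i ∈ A, ((lam τ * sz (be₀ τ) : ℤ) : ℝ) * (c i * (P i * dl i τ)) :=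
              Finset.sum_comm
          _ = ∑ τ, ((lam τ * sz (be₀ τ) : ℤ) : ℝ) := by
              refine Finset.sum_congr rfl fun τ _ => ?_
              rw [← Finset.mul_sum, hsnoc τ, mul_one]
          _ = (Lz : ℝ) := by rw [hLz, Int.cast_sum]
      have hsplit : ∑ i ∈ A', c i * P i * W i = (Lz : ℝ) := by
        have := Finset.sum_filter_add_sum_filter_not A (K be₀) (fun i => c i * P i * W i)
        have hz : ∑ i ∈ A.filter (K be₀), c i * P i * W i = 0 := by
          refine Finset.sum_eq_zero fun i hi => ?_
          rw [Finset.mem_filter] at hi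
          rw [hWK i hi.1 hi.2, mul_zero]
        rw [hA']
        rw [hz] at this
        rw [zero_add] at this
        rw [this, hsum]
      calc ∑ i ∈ A', (c i * W i / (Lz : ℝ)) * P i
          = (∑ i ∈ A', c i * P i * W i) / (Lz : ℝ) := by
            rw [Finset.sum_div]
            exact Finset.sum_congr rfl fun i _ => by field_simp
        _ = 1 := by rw [hsplit, div_self hLneR]
    have := IH A' (fun i => c i * W i / (Lz : ℝ)) (fun i j => d i j.castSucc)
      (fun i hi j t => hpm i (Finset.mem_of_mem_filter i hi) j.castSucc t)
      (fun i hi j => hodd i (Finset.mem_of_mem_filter i hi) j.castSucc)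
      heq'
    calc (8:ℕ) ^ (r+1) = 8 * 8 ^ r := by ring
      _ ≤ 8 * (3 ^ r * A'.card) := by exact Nat.mul_le_mul_left 8 this
      _ = 3 ^ r * (8 * A'.card) := by ring
      _ ≤ 3 ^ r * (3 * A.card) := Nat.mul_le_mul_left _ hcard'
      _ = 3 ^ (r+1) * A.card := by ring

open Matrix Equiv Finset

/-- block index equivalence -/
def bEq (r : ℕ) : Fin 3 × Fin r ≃ Fin (3 * r) where
  toFun x := ⟨3 * (x.2 : ℕ) + (x.1 : ℕ), by
    obtain ⟨p, j⟩ := x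
    have := p.isLt; have := j.isLt
    simp only []
    omega⟩
  invFun i := (⟨(i : ℕ) % 3, by omega⟩, ⟨(i : ℕ) / 3, by have := i.isLt; omega⟩)
  left_inv := by
    rintro ⟨p, j⟩
    have := p.isLt; have := j.isLt
    refine Prod.ext (Fin.ext ?_) (Fin.ext ?_) <;> simp <;> omega
  right_inv := by
    intro i
    have := i.isLt
    refine Fin.ext ?_
    simp
    omega

lemma blockDiag3_eq {r : ℕ} (X : Fin r → Matrix (Fin 3) (Fin 3) ℝ) :
    blockDiag3 X = (Matrix.blockDiagonal X).submatrix ((bEq r).symm) ((bEq r).symm) := by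
  funext i i'
  show (if (i : ℕ) / 3 = (i' : ℕ) / 3 then _ else 0) = _
  rw [Matrix.submatrix_apply, Matrix.blockDiagonal_apply]
  by_cases h : (i : ℕ) / 3 = (i' : ℕ) / 3
  · rw [if_pos h, if_pos (by exact Fin.ext h)]
    rfl
  · rw [if_neg h, if_neg (by intro hc; exact h (congrArg Fin.val hc))]

lemma per_submatrix_equiv {m n : Type*} [Fintype m] [DecidableEq m] [Fintype n] [DecidableEq n]
    (e : m ≃ n) (A : Matrix n n ℝ) : (A.submatrix e e).per = A.per := by
  unfold Matrix.per
  refine Fintype.sum_equiv (e.permCongr) _ _ fun σ => ?_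
  refine Fintype.prod_equiv e _ _ fun i => ?_
  simp [Equiv.permCongr_apply]

lemma per_blockDiagonal {n o : Type*} [Fintype n] [DecidableEq n] [Fintype o] [DecidableEq o]
    (M : o → Matrix n n ℝ) : (Matrix.blockDiagonal M).per = ∏ k, (M k).per := by
  unfold Matrix.per
  rw [Finset.prod_univ_sum, Fintype.piFinset_univ]
  set preserving_snd : Finset (Equiv.Perm (n × o)) :=
    Finset.univ.filter (fun σ => ∀ x, (σ x).snd = x.snd) with hps
  have mem_preserving_snd :
      ∀ {σ : Equiv.Perm (n × o)}, σ ∈ preserving_snd ↔ ∀ x, (σ x).snd = x.snd := fun {σ} =>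
    Finset.mem_filter.trans ⟨fun h => h.2, fun h => ⟨Finset.mem_univ _, h⟩⟩
  rw [← Finset.sum_subset (Finset.subset_univ preserving_snd) _]
  · refine (Finset.sum_bij (fun (σ : o → Equiv.Perm n) (_ : σ ∈ Finset.univ) =>
      Equiv.prodCongrLeft σ) ?_ ?_ ?_ ?_).symm
    · intro σ _
      rw [mem_preserving_snd]
      rintro ⟨-, x⟩
      simp only [Equiv.prodCongrLeft_apply]
    · intro σ _ σ' _ eq
      funext k
      ext x
      have : ∀ k x, Equiv.prodCongrLeft σ (x, k) = Equiv.prodCongrLeft σ' (x, k) :=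
        fun k x => by rw [eq]
      simpa only [Equiv.prodCongrLeft_apply, Prod.mk.injEq, and_true] using this k x
    · intro σ hσ
      rw [mem_preserving_snd] at hσ
      have hσ' : ∀ x, (σ⁻¹ x).snd = x.snd := by
        intro x
        conv_rhs => rw [← (show ∀ y, σ (σ⁻¹ y) = y from σ.apply_symm_apply) x, hσ]
      have mk_apply_eq : ∀ k x, ((σ (x, k)).fst, k) = σ (x, k) := by
        intro k x
        ext
        · simp only
        · simp only [hσ]
      have mk_inv_apply_eq : ∀ k x, ((σ⁻¹ (x, k)).fst, k) = σ⁻¹ (x, k) := by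
        intro k x
        conv_lhs => rw [← (show ∀ y, σ (σ⁻¹ y) = y from σ.apply_symm_apply) (x, k)]
        ext
        · simp only [(show ∀ y, σ (σ⁻¹ y) = y from σ.apply_symm_apply)]
        · simp only [hσ']
      refine ⟨fun k => ⟨fun x => (σ (x, k)).fst, fun x => (σ⁻¹ (x, k)).fst, ?_, ?_⟩,
        Finset.mem_univ _, ?_⟩
      · intro x
        simp only [mk_apply_eq, (show ∀ y, σ⁻¹ (σ y) = y from σ.symm_apply_apply)]
      · intro x
        simp only [mk_inv_apply_eq, (show ∀ y, σ (σ⁻¹ y) = y from σ.apply_symm_apply)]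
      · ext ⟨x, k⟩
        · simp only [Equiv.coe_fn_mk, Equiv.prodCongrLeft_apply]
        · simp only [Equiv.prodCongrLeft_apply, hσ]
    · intro σ _
      rw [← Finset.univ_product_univ, Finset.prod_product_right]
      refine Finset.prod_congr rfl fun k _ => Finset.prod_congr rfl fun x _ => ?_
      rw [Equiv.prodCongrLeft_apply, Matrix.blockDiagonal_apply_eq]
  · intro σ _ hσ
    rw [mem_preserving_snd] at hσ
    obtain ⟨⟨x, k⟩, hkx⟩ := not_forall.mp hσ
    apply Finset.prod_eq_zero (Finset.mem_univ (x, k))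
    have h0 := Matrix.blockDiagonal_apply_ne M x (σ (x, k)).1 (k := k) (k' := (σ (x, k)).2)
      (Ne.symm hkx)
    simpa using h0


def toR (b : Bool) : ℝ := if b then 1 else -1

lemma sumpi {α β : Type*} [Fintype α] [DecidableEq α] [Fintype β] (F : α → β → ℝ) :
    ∑ x : α → β, ∏ a, F a (x a) = ∏ a, ∑ b, F a b := by
  rw [Finset.prod_univ_sum, Fintype.piFinset_univ]

lemma ortho (σ τ : Equiv.Perm (Fin 3)) :
    ∑ b : Fin 3 → Fin 3 → Bool,
      (∏ p, toR (b p (σ p))) * (∏ p, toR (b p (τ p))) = if σ = τ then 512 else 0 := by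
  have hterm : ∀ b : Fin 3 → Fin 3 → Bool,
      (∏ p, toR (b p (σ p))) * (∏ p, toR (b p (τ p)))
        = ∏ p, ∏ q, ((if q = σ p then toR (b p q) else 1) * (if q = τ p then toR (b p q) else 1)) := by
    intro b
    rw [← Finset.prod_mul_distrib]
    refine Finset.prod_congr rfl fun p _ => ?_
    rw [Finset.prod_mul_distrib]
    congr 1 <;> simp
  have hmain : ∑ b : Fin 3 → Fin 3 → Bool,
      (∏ p, toR (b p (σ p))) * (∏ p, toR (b p (τ p)))
      = ∏ p, ∏ q, (∑ t : Bool, ((if q = σ p then toR t else 1) * (if q = τ p then toR t else 1))) := by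
    rw [Finset.sum_congr rfl fun b _ => hterm b]
    rw [sumpi (fun p (row : Fin 3 → Bool) => ∏ q, ((if q = σ p then toR (row q) else 1) * (if q = τ p then toR (row q) else 1)))]
    refine Finset.prod_congr rfl fun p _ => ?_
    rw [sumpi (fun q (t : Bool) => ((if q = σ p then toR t else 1) * (if q = τ p then toR t else 1)))]
  rw [hmain]
  by_cases h : σ = τ
  · subst h
    rw [if_pos rfl]
    have h2 : ∀ p q : Fin 3,
        (∑ t : Bool, ((if q = σ p then toR t else 1) * (if q = σ p then toR t else 1))) = 2 := by
      intro p q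
      by_cases hq : q = σ p <;> simp [hq, toR] <;> norm_num
    rw [Finset.prod_congr rfl fun p _ => Finset.prod_congr rfl fun q _ => h2 p q]
    norm_num
  · rw [if_neg h]
    have : ∃ p, σ p ≠ τ p := by
      by_contra hc
      push_neg at hc
      exact h (Equiv.ext hc)
    obtain ⟨p, hp⟩ := this
    refine Finset.prod_eq_zero (Finset.mem_univ p) ?_
    refine Finset.prod_eq_zero (Finset.mem_univ (σ p)) ?_
    simp [hp, toR]

lemma F1 (σ : Equiv.Perm (Fin 3)) :
    ∑ b : Fin 3 → Fin 3 → Bool,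
      (∏ p, toR (b p (σ p))) * Matrix.per (Matrix.of fun p q => toR (b p q)) = 512 := by
  have hper : ∀ b : Fin 3 → Fin 3 → Bool,
      Matrix.per (Matrix.of fun p q => toR (b p q)) = ∑ τ : Equiv.Perm (Fin 3), ∏ p, toR (b p (τ p)) := by
    intro b; rfl
  calc ∑ b : Fin 3 → Fin 3 → Bool,
      (∏ p, toR (b p (σ p))) * Matrix.per (Matrix.of fun p q => toR (b p q))
      = ∑ b : Fin 3 → Fin 3 → Bool, ∑ τ : Equiv.Perm (Fin 3),
          (∏ p, toR (b p (σ p))) * ∏ p, toR (b p (τ p)) := by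
        refine Finset.sum_congr rfl fun b _ => ?_
        rw [hper b, Finset.mul_sum]
    _ = ∑ τ : Equiv.Perm (Fin 3), ∑ b : Fin 3 → Fin 3 → Bool,
          (∏ p, toR (b p (σ p))) * ∏ p, toR (b p (τ p)) := Finset.sum_comm
    _ = ∑ τ : Equiv.Perm (Fin 3), if σ = τ then (512:ℝ) else 0 :=
        Finset.sum_congr rfl fun τ _ => ortho σ τ
    _ = 512 := by simp

lemma det_col {n : Type*} [Fintype n] [DecidableEq n] (M : Matrix n n ℝ) :
    M.det = ∑ τ : Equiv.Perm n, ((Equiv.Perm.sign τ : ℤ) : ℝ) * ∏ p, M p (τ p) := by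
  rw [← Matrix.det_transpose, Matrix.det_apply']
  rfl

lemma F2 (σ : Equiv.Perm (Fin 3)) (T : Matrix (Fin 3) (Fin 3) ℝ) :
    ∑ b : Fin 3 → Fin 3 → Bool,
      (∏ p, toR (b p (σ p))) * (Matrix.hadamard T (Matrix.of fun p q => toR (b p q))).det
      = 512 * (((Equiv.Perm.sign σ : ℤ) : ℝ) * ∏ p, T p (σ p)) := by
  have hdet : ∀ b : Fin 3 → Fin 3 → Bool,
      (Matrix.hadamard T (Matrix.of fun p q => toR (b p q))).det
        = ∑ τ : Equiv.Perm (Fin 3),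
            (((Equiv.Perm.sign τ : ℤ) : ℝ) * ∏ p, T p (τ p)) * ∏ p, toR (b p (τ p)) := by
    intro b
    rw [det_col]
    refine Finset.sum_congr rfl fun τ _ => ?_
    rw [mul_assoc]
    congr 1
    rw [← Finset.prod_mul_distrib]
    rfl
  calc ∑ b : Fin 3 → Fin 3 → Bool,
      (∏ p, toR (b p (σ p))) * (Matrix.hadamard T (Matrix.of fun p q => toR (b p q))).det
      = ∑ b : Fin 3 → Fin 3 → Bool, ∑ τ : Equiv.Perm (Fin 3),
          (((Equiv.Perm.sign τ : ℤ) : ℝ) * ∏ p, T p (τ p)) *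
            ((∏ p, toR (b p (σ p))) * ∏ p, toR (b p (τ p))) := by
        refine Finset.sum_congr rfl fun b _ => ?_
        rw [hdet b, Finset.mul_sum]
        exact Finset.sum_congr rfl fun τ _ => by ring
    _ = ∑ τ : Equiv.Perm (Fin 3),
          (((Equiv.Perm.sign τ : ℤ) : ℝ) * ∏ p, T p (τ p)) *
            ∑ b : Fin 3 → Fin 3 → Bool, (∏ p, toR (b p (σ p))) * ∏ p, toR (b p (τ p)) := by
        rw [Finset.sum_comm]
        exact Finset.sum_congr rfl fun τ _ => by rw [Finset.mul_sum]
    _ = ∑ τ : Equiv.Perm (Fin 3),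
          (((Equiv.Perm.sign τ : ℤ) : ℝ) * ∏ p, T p (τ p)) * if σ = τ then (512:ℝ) else 0 := by
        exact Finset.sum_congr rfl fun τ _ => by rw [ortho σ τ]
    _ = 512 * (((Equiv.Perm.sign σ : ℤ) : ℝ) * ∏ p, T p (σ p)) := by
        rw [Finset.sum_eq_single σ]
        · rw [if_pos rfl]; ring
        · intro τ _ hτ
          rw [if_neg (Ne.symm hτ), mul_zero]
        · intro hσ
          exact absurd (Finset.mem_univ σ) hσ

-- sign product and fiber cardinality facts
lemma sign_prod : (∏ σ : Equiv.Perm (Fin 3), (Equiv.Perm.sign σ : ℤ)) = -1 := by decide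

lemma fiber_card : ∀ p q : Fin 3,
    (Finset.univ.filter (fun σ : Equiv.Perm (Fin 3) => σ p = q)).card = 2 := by decide




lemma prod_pm {α : Type*} (s : Finset α) (f : α → ℝ) (hf : ∀ a ∈ s, f a = 1 ∨ f a = -1) :
    (∏ a ∈ s, f a) = 1 ∨ (∏ a ∈ s, f a) = -1 := by
  refine Finset.prod_induction f (fun x => x = 1 ∨ x = -1) ?_ (Or.inl rfl) hf
  rintro a b (ha | ha) (hb | hb) <;> rw [ha, hb] <;> norm_num

theorem main_glue (r k : ℕ)
    (c : Fin k → ℝ) (S : Fin k → Matrix (Fin (3 * r)) (Fin (3 * r)) ℝ)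
    (hS : ∀ i, ∀ u v, S i u v = 1 ∨ S i u v = -1)
    (h : ∀ X : Fin r → Matrix (Fin 3) (Fin 3) ℝ,
      (∀ j, ∀ p q, X j p q = 1 ∨ X j p q = -1) →
      Matrix.per (blockDiag3 X) =
        ∑ i, c i * (Matrix.hadamard (S i) (blockDiag3 X)).det) :
    ∀ σv : Fin r → Equiv.Perm (Fin 3),
      ∑ i, c i * ∏ j, (((Equiv.Perm.sign (σv j) : ℤ) : ℝ) *
        ∏ p, S i (bEq r (p, j)) (bEq r (σv j p, j))) = 1 := by
  classical
  set Tb : Fin k → Fin r → Matrix (Fin 3) (Fin 3) ℝ :=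
    fun i j => Matrix.of fun p q => S i (bEq r (p, j)) (bEq r (q, j)) with hTb
  have hhad : ∀ i (X : Fin r → Matrix (Fin 3) (Fin 3) ℝ),
      Matrix.hadamard (S i) (blockDiag3 X) =
        blockDiag3 (fun j => Matrix.hadamard (Tb i j) (X j)) := by
    intro i X
    funext a b
    show S i a b * blockDiag3 X a b = blockDiag3 _ a b
    unfold blockDiag3
    split_ifs with hc
    · show S i a b * X _ _ _ = Matrix.hadamard (Tb i _) (X _) _ _
      rw [Matrix.hadamard_apply]
      have hval1 : bEq r (⟨(a : ℕ) % 3, by omega⟩, ⟨(a : ℕ) / 3, by have := a.isLt; omega⟩) = a := by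
        apply Fin.ext
        show 3 * ((a : ℕ) / 3) + (a : ℕ) % 3 = a
        omega
      have hval2 : bEq r (⟨(b : ℕ) % 3, by omega⟩, ⟨(a : ℕ) / 3, by have := a.isLt; omega⟩) = b := by
        apply Fin.ext
        show 3 * ((a : ℕ) / 3) + (b : ℕ) % 3 = b
        have := b.isLt
        omega
      show S i a b * X _ _ _ = S i _ _ * X _ _ _
      rw [hval1, hval2]
    · rw [mul_zero]
  have hper : ∀ X : Fin r → Matrix (Fin 3) (Fin 3) ℝ,
      Matrix.per (blockDiag3 X) = ∏ j, Matrix.per (X j) := by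
    intro X
    rw [blockDiag3_eq, per_submatrix_equiv, per_blockDiagonal]
  have hdet : ∀ Y : Fin r → Matrix (Fin 3) (Fin 3) ℝ,
      (blockDiag3 Y).det = ∏ j, (Y j).det := by
    intro Y
    rw [blockDiag3_eq, Matrix.det_submatrix_equiv_self, Matrix.det_blockDiagonal]
  have hstar : ∀ X : Fin r → Matrix (Fin 3) (Fin 3) ℝ,
      (∀ j, ∀ p q, X j p q = 1 ∨ X j p q = -1) →
      ∏ j, Matrix.per (X j) = ∑ i, c i * ∏ j, (Matrix.hadamard (Tb i j) (X j)).det := by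
    intro X hX
    rw [← hper X, h X hX]
    refine Finset.sum_congr rfl fun i _ => ?_
    rw [hhad i X, hdet]
  intro σv
  set D : Fin k → Fin r → Equiv.Perm (Fin 3) → ℝ :=
    fun i j σ => ((Equiv.Perm.sign σ : ℤ) : ℝ) * ∏ p, Tb i j p (σ p) with hD
  have h512 : ((512 : ℝ) ^ r) ≠ 0 := by positivity
  have key : (512:ℝ)^r = (512:ℝ)^r * ∑ i, c i * ∏ j, D i j (σv j) := by
    have hL : ∑ B : Fin r → (Fin 3 → Fin 3 → Bool),
        ∏ j, ((∏ p, toR (B j p (σv j p))) * Matrix.per (Matrix.of fun p q => toR (B j p q)))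
        = (512:ℝ)^r := by
      rw [sumpi (fun j (b : Fin 3 → Fin 3 → Bool) =>
        (∏ p, toR (b p (σv j p))) * Matrix.per (Matrix.of fun p q => toR (b p q)))]
      rw [Finset.prod_congr rfl fun j _ => F1 (σv j)]
      rw [Finset.prod_const]
      simp
    have hR : ∀ i, ∑ B : Fin r → (Fin 3 → Fin 3 → Bool),
        ∏ j, ((∏ p, toR (B j p (σv j p))) *
          (Matrix.hadamard (Tb i j) (Matrix.of fun p q => toR (B j p q))).det)
        = (512:ℝ)^r * ∏ j, D i j (σv j) := by
      intro i
      rw [sumpi (fun j (b : Fin 3 → Fin 3 → Bool) =>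
        (∏ p, toR (b p (σv j p))) * (Matrix.hadamard (Tb i j) (Matrix.of fun p q => toR (b p q))).det)]
      rw [Finset.prod_congr rfl fun j _ => F2 (σv j) (Tb i j)]
      rw [Finset.prod_mul_distrib, Finset.prod_const]
      simp
      rfl
    have hmid : ∀ B : Fin r → (Fin 3 → Fin 3 → Bool),
        ∏ j, ((∏ p, toR (B j p (σv j p))) * Matrix.per (Matrix.of fun p q => toR (B j p q)))
        = ∑ i, c i * ∏ j, ((∏ p, toR (B j p (σv j p))) *
            (Matrix.hadamard (Tb i j) (Matrix.of fun p q => toR (B j p q))).det) := by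
      intro B
      have hsign : ∀ j, ∀ p q, (Matrix.of fun p q => toR (B j p q) : Matrix (Fin 3) (Fin 3) ℝ) p q = 1
          ∨ (Matrix.of fun p q => toR (B j p q) : Matrix (Fin 3) (Fin 3) ℝ) p q = -1 := by
        intro j p q
        cases hb : B j p q <;> simp [toR, hb]
      rw [Finset.prod_mul_distrib]
      rw [hstar (fun j => Matrix.of fun p q => toR (B j p q)) hsign]
      rw [Finset.mul_sum]
      refine Finset.sum_congr rfl fun i _ => ?_
      rw [Finset.prod_mul_distrib]
      ring
    calc (512:ℝ)^r
        = ∑ B : Fin r → (Fin 3 → Fin 3 → Bool),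
            ∏ j, ((∏ p, toR (B j p (σv j p))) * Matrix.per (Matrix.of fun p q => toR (B j p q))) :=
          hL.symm
      _ = ∑ B : Fin r → (Fin 3 → Fin 3 → Bool), ∑ i, c i *
            ∏ j, ((∏ p, toR (B j p (σv j p))) *
              (Matrix.hadamard (Tb i j) (Matrix.of fun p q => toR (B j p q))).det) :=
          Finset.sum_congr rfl fun B _ => hmid B
      _ = ∑ i, ∑ B : Fin r → (Fin 3 → Fin 3 → Bool), c i *
            ∏ j, ((∏ p, toR (B j p (σv j p))) *
              (Matrix.hadamard (Tb i j) (Matrix.of fun p q => toR (B j p q))).det) :=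
          Finset.sum_comm
      _ = ∑ i, c i * ((512:ℝ)^r * ∏ j, D i j (σv j)) := by
          refine Finset.sum_congr rfl fun i _ => ?_
          rw [← Finset.mul_sum, hR i]
      _ = (512:ℝ)^r * ∑ i, c i * ∏ j, D i j (σv j) := by
          rw [Finset.mul_sum]
          exact Finset.sum_congr rfl fun i _ => by ring
  have hone : ∑ i, c i * ∏ j, D i j (σv j) = 1 := by
    refine mul_left_cancel₀ h512 ?_
    rw [mul_one, ← key]
  exact hone

end BlockAmp

theorem block_amplification (r k : ℕ) (hr : 1 ≤ r)
    (c : Fin k → ℝ) (S : Fin k → Matrix (Fin (3 * r)) (Fin (3 * r)) ℝ)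
    (hS : ∀ i, ∀ u v, S i u v = 1 ∨ S i u v = -1)
    (h : ∀ X : Fin r → Matrix (Fin 3) (Fin 3) ℝ,
      (∀ j, ∀ p q, X j p q = 1 ∨ X j p q = -1) →
      Matrix.per (blockDiag3 X) =
        ∑ i, c i * (Matrix.hadamard (S i) (blockDiag3 X)).det) :
    ((8 : ℝ) / 3) ^ r ≤ (k : ℝ) := by
  classical
  have claimA := BlockAmp.main_glue r k c S hS h
  set g : Equiv.Perm (Fin 3) ≃ Fin 6 := Fintype.equivFinOfCardEq (by rw [Fintype.card_perm, Fintype.card_fin]; rfl) with hg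
  set D : Fin k → Fin r → Equiv.Perm (Fin 3) → ℝ :=
    fun i j σ => ((Equiv.Perm.sign σ : ℤ) : ℝ) *
      ∏ p, S i (BlockAmp.bEq r (p, j)) (BlockAmp.bEq r (σ p, j)) with hD
  have hpm : ∀ i j σ, D i j σ = 1 ∨ D i j σ = -1 := by
    intro i j σ
    have h1 : ((Equiv.Perm.sign σ : ℤ) : ℝ) = 1 ∨ ((Equiv.Perm.sign σ : ℤ) : ℝ) = -1 := by
      rcases Int.units_eq_one_or (Equiv.Perm.sign σ) with h1 | h1 <;> rw [h1] <;> norm_num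
    have h2 := BlockAmp.prod_pm Finset.univ
      (fun p => S i (BlockAmp.bEq r (p, j)) (BlockAmp.bEq r (σ p, j)))
      (fun p _ => hS i _ _)
    simp only [hD]
    rcases h1 with h1 | h1 <;> rcases h2 with h2 | h2 <;> rw [h1, h2] <;> norm_num
  have hodd : ∀ i j, (∏ σ : Equiv.Perm (Fin 3), D i j σ) = -1 := by
    intro i j
    simp only [hD]
    rw [Finset.prod_mul_distrib]
    have hfirst : (∏ σ : Equiv.Perm (Fin 3), ((Equiv.Perm.sign σ : ℤ) : ℝ)) = -1 := by
      rw [← Int.cast_prod, BlockAmp.sign_prod]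
      norm_num
    have hsecond : (∏ σ : Equiv.Perm (Fin 3),
        ∏ p, S i (BlockAmp.bEq r (p, j)) (BlockAmp.bEq r (σ p, j))) = 1 := by
      rw [Finset.prod_comm]
      refine Finset.prod_eq_one fun p _ => ?_
      rw [Finset.prod_comp (fun q => S i (BlockAmp.bEq r (p, j)) (BlockAmp.bEq r (q, j)))
        (fun σ : Equiv.Perm (Fin 3) => σ p)]
      refine Finset.prod_eq_one fun q _ => ?_
      rw [BlockAmp.fiber_card p q]
      rcases hS i (BlockAmp.bEq r (p, j)) (BlockAmp.bEq r (q, j)) with hh | hh <;>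
        rw [hh] <;> norm_num
    rw [hfirst, hsecond]
    norm_num
  have hcore := BlockAmp.core r (Finset.univ : Finset (Fin k)) c
    (fun i j t => D i j (g.symm t))
    (fun i _ j t => hpm i j (g.symm t))
    (fun i _ j => by
      rw [Equiv.prod_comp g.symm (D i j)]
      exact hodd i j)
    (fun σ' => claimA (fun j => g.symm (σ' j)))
  rw [Finset.card_univ, Fintype.card_fin] at hcore
  rw [div_pow]
  rw [div_le_iff₀ (by positivity : (0:ℝ) < (3:ℝ) ^ r)]
  have hc : (8:ℝ)^r ≤ (3:ℝ)^r * k := by exact_mod_cast hcore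
  linarith
end

section
/- Let A be an n×n matrix of n² distinct indeterminates. If per(A) = Σ_{i=1}^k c_i · det(S_i ∘ A) as polynomials, where c_i ∈ ℝ and S_1,…,S_k are n×n sign matrices, then k ≥ (8/3)^{⌊n/3⌋}. -/
set_option maxRecDepth 10000
set_option maxHeartbeats 4000000

open MvPolynomial

/-- The generic `n × n` matrix whose entries are distinct indeterminates. -/
noncomputable def genericMatrix (n : ℕ) :
    Matrix (Fin n) (Fin n) (MvPolynomial (Fin n × Fin n) ℝ) := fun i j => X (i, j)

namespace PermanentAux

variable {R : Type*} [CommRing R]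

theorem per_submatrix_equiv {m n : Type*} [Fintype m] [DecidableEq m] [Fintype n] [DecidableEq n]
    (A : Matrix m m R) (e : n ≃ m) :
    (A.submatrix e e).per = A.per := by
  rw [Matrix.per, Matrix.per]
  apply Fintype.sum_equiv (Equiv.permCongr e)
  intro σ
  rw [← Equiv.prod_comp e]
  simp [Matrix.submatrix_apply, Equiv.permCongr_apply]

theorem per_one {m : Type*} [Fintype m] [DecidableEq m] :
    (1 : Matrix m m R).per = 1 := by
  rw [Matrix.per]
  rw [Finset.sum_eq_single (1 : Equiv.Perm m)]
  · refine Finset.prod_eq_one fun i _ => ?_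
    show (1 : Matrix m m R) i i = 1
    exact Matrix.one_apply_eq i
  · intro σ _ hσ
    obtain ⟨i, hi⟩ : ∃ i, σ i ≠ i := by
      by_contra hc
      push_neg at hc
      exact hσ (Equiv.ext hc)
    exact Finset.prod_eq_zero (Finset.mem_univ i) (Matrix.one_apply_ne' (by simpa using hi))
  · intro hm; exact absurd (Finset.mem_univ _) hm

theorem _root_.Equiv.Perm.apply_inv_self {α : Type*} (f : Equiv.Perm α) (x : α) :
    f (f⁻¹ x) = x := (Equiv.eq_symm_apply f).mp rfl

theorem _root_.Equiv.Perm.inv_apply_self {α : Type*} (f : Equiv.Perm α) (x : α) :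
    f⁻¹ (f x) = x := Equiv.Perm.inv_eq_iff_eq.mpr rfl

open Equiv Equiv.Perm in
theorem per_blockDiagonal {n o : Type*} [Fintype n] [DecidableEq n] [Fintype o] [DecidableEq o]
    (M : o → Matrix n n R) :
    (Matrix.blockDiagonal M).per = ∏ k, (M k).per := by
  simp_rw [Matrix.per]
  rw [Finset.prod_sum]
  simp_rw [Finset.prod_attach_univ, Finset.univ_pi_univ]
  let preserving_snd : Finset (Equiv.Perm (n × o)) := {σ | ∀ x, (σ x).snd = x.snd}
  have mem_preserving_snd :
    ∀ {σ : Equiv.Perm (n × o)}, σ ∈ preserving_snd ↔ ∀ x, (σ x).snd = x.snd := fun {σ} =>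
    Finset.mem_filter.trans ⟨fun h => h.2, fun h => ⟨Finset.mem_univ _, h⟩⟩
  rw [← Finset.sum_subset (Finset.subset_univ preserving_snd) _]
  · refine (Finset.sum_bij (fun σ _ => prodCongrLeft fun k ↦ σ k (Finset.mem_univ k)) ?_ ?_ ?_ ?_).symm
    · intro σ _
      rw [mem_preserving_snd]
      rintro ⟨-, x⟩
      simp only [prodCongrLeft_apply]
    · intro σ _ σ' _ eq
      ext x hx k
      have :
        ∀ k x,
          prodCongrLeft (fun k => σ k (Finset.mem_univ _)) (k, x) =
            prodCongrLeft (fun k => σ' k (Finset.mem_univ _)) (k, x) :=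
        fun k x => by rw [eq]
      simp only [prodCongrLeft_apply, Prod.mk.injEq] at this
      exact (this k x).1
    · intro σ hσ
      rw [mem_preserving_snd] at hσ
      have hσ' : ∀ x, (σ⁻¹ x).snd = x.snd := by
        intro x
        conv_rhs => rw [← Perm.apply_inv_self σ x, hσ]
      have mk_apply_eq : ∀ k x, ((σ (x, k)).fst, k) = σ (x, k) := by
        intro k x
        ext
        · simp only
        · simp only [hσ]
      have mk_inv_apply_eq : ∀ k x, ((σ⁻¹ (x, k)).fst, k) = σ⁻¹ (x, k) := by
        intro k x
        conv_lhs => rw [← Perm.apply_inv_self σ (x, k)]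
        ext
        · simp only [apply_inv_self]
        · simp only [hσ']
      refine ⟨fun k _ => ⟨fun x => (σ (x, k)).fst, fun x => (σ⁻¹ (x, k)).fst, ?_, ?_⟩, ?_, ?_⟩
      · intro x
        simp only [mk_apply_eq, inv_apply_self]
      · intro x
        simp only [mk_inv_apply_eq, apply_inv_self]
      · apply Finset.mem_univ
      · ext ⟨k, x⟩
        · simp only [coe_fn_mk, prodCongrLeft_apply]
        · simp only [prodCongrLeft_apply, hσ]
    · intro σ _
      rw [← Finset.univ_product_univ, Finset.prod_product_right]
      simp only [Matrix.blockDiagonal_apply_eq, prodCongrLeft_apply]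
  · intro σ _ hσ
    rw [mem_preserving_snd] at hσ
    obtain ⟨⟨k, x⟩, hkx⟩ := not_forall.mp hσ
    rw [Finset.prod_eq_zero (Finset.mem_univ (k, x))]
    rw [Matrix.blockDiagonal_apply_ne]
    exact fun H => hkx H.symm

open Equiv Equiv.Perm in
theorem per_fromBlocks_zero {m n : Type*} [Fintype m] [DecidableEq m] [Fintype n] [DecidableEq n]
    (A : Matrix m m R) (D : Matrix n n R) :
    (Matrix.fromBlocks A 0 0 D).per = A.per * D.per := by
  classical
  simp_rw [Matrix.per]
  convert Eq.symm <|
    Finset.sum_subset (Finset.subset_univ ((sumCongrHom m n).range : Set (Perm (m ⊕ n))).toFinset) ?_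
  · simp_rw [Finset.sum_mul_sum, ← Finset.sum_product', Finset.univ_product_univ]
    refine Finset.sum_nbij (fun σ ↦ σ.fst.sumCongr σ.snd) ?_ ?_ ?_ ?_
    · intro σ₁₂ _
      erw [Set.mem_toFinset, MonoidHom.mem_range]
      use σ₁₂
      simp only [sumCongrHom_apply]
    · intro σ₁ _ σ₂ _
      dsimp only
      intro h
      have h2 : ∀ x, Perm.sumCongr σ₁.fst σ₁.snd x = Perm.sumCongr σ₂.fst σ₂.snd x :=
        DFunLike.congr_fun h
      simp only [Sum.map_inr, Sum.map_inl, Perm.sumCongr_apply, Sum.forall, Sum.inl.injEq,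
        Sum.inr.injEq] at h2
      ext x
      · exact h2.left x
      · exact h2.right x
    · intro σ hσ
      erw [Set.mem_toFinset, MonoidHom.mem_range] at hσ
      obtain ⟨σ₁₂, hσ₁₂⟩ := hσ
      use σ₁₂
      rw [← hσ₁₂]
      simp
    · simp only [forall_prop_of_true, Prod.forall, Finset.mem_univ]
      intro σ₁ σ₂
      rw [Fintype.prod_sum_type]
      simp_rw [Equiv.sumCongr_apply, Sum.map_inr, Sum.map_inl, Matrix.fromBlocks_apply₁₁,
        Matrix.fromBlocks_apply₂₂]
  · rintro σ - hσn
    have h1 : ¬∀ x, ∃ y, Sum.inl y = σ (Sum.inl x) := by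
      rw [Set.mem_toFinset] at hσn
      simpa only [Set.MapsTo, Set.mem_range, forall_exists_index, forall_apply_eq_imp_iff] using
        mt mem_sumCongrHom_range_of_perm_mapsTo_inl hσn
    obtain ⟨a, ha⟩ := not_forall.mp h1
    cases' hx : σ (Sum.inl a) with a2 b
    · have hn := (not_exists.mp ha) a2
      exact absurd hx.symm hn
    · rw [Finset.prod_eq_zero (Finset.mem_univ (Sum.inl a))]
      rw [hx, Matrix.fromBlocks_apply₁₂, Matrix.zero_apply]

theorem per_fin_three (A : Matrix (Fin 3) (Fin 3) R) :
    A.per = A 0 0 * A 1 1 * A 2 2 + A 0 0 * A 1 2 * A 2 1 + A 0 1 * A 1 0 * A 2 2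
      + A 0 1 * A 1 2 * A 2 0 + A 0 2 * A 1 0 * A 2 1 + A 0 2 * A 1 1 * A 2 0 := by
  rw [Matrix.per]
  rw [show (Finset.univ : Finset (Equiv.Perm (Fin 3))) =
    {1, Equiv.swap 0 1, Equiv.swap 0 2, Equiv.swap 1 2,
     Equiv.swap 0 1 * Equiv.swap 1 2, Equiv.swap 0 2 * Equiv.swap 1 2} from by decide]
  rw [Finset.sum_insert (by decide), Finset.sum_insert (by decide),
    Finset.sum_insert (by decide), Finset.sum_insert (by decide),
    Finset.sum_insert (by decide), Finset.sum_singleton]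
  simp only [Fin.prod_univ_three]
  simp (config := { decide := true }) only [Equiv.swap_apply_def, Equiv.Perm.mul_apply,
    Equiv.Perm.one_apply, if_true, if_false]
  ring

/-- The sixteen `3 × 3` gadget sign matrices. -/
def gB : Fin 16 → Fin 3 → Fin 3 → ℤ := ![
  ![![1,1,1],![1,1,1],![1,1,1]],
  ![![1,1,1],![1,1,-1],![-1,-1,1]],
  ![![1,1,1],![1,1,1],![-1,1,1]],
  ![![1,1,1],![1,1,-1],![1,-1,1]],
  ![![1,1,1],![1,-1,1],![1,1,-1]],
  ![![1,1,1],![1,-1,-1],![-1,-1,-1]],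
  ![![1,1,1],![1,-1,1],![-1,1,-1]],
  ![![1,1,1],![1,-1,-1],![1,-1,-1]],
  ![![1,1,1],![1,1,-1],![-1,1,1]],
  ![![1,1,1],![1,1,1],![1,-1,1]],
  ![![1,1,1],![1,1,-1],![1,1,1]],
  ![![1,1,1],![1,1,1],![-1,-1,1]],
  ![![1,1,1],![1,-1,-1],![-1,1,-1]],
  ![![1,1,1],![1,-1,1],![1,-1,-1]],
  ![![1,1,1],![1,-1,-1],![1,1,-1]],
  ![![1,1,1],![1,-1,1],![-1,-1,-1]]]

def det3 (f : Fin 3 → Fin 3 → ℤ) : ℤ :=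
  f 0 0 * f 1 1 * f 2 2 - f 0 0 * f 1 2 * f 2 1 - f 0 1 * f 1 0 * f 2 2
    + f 0 1 * f 1 2 * f 2 0 + f 0 2 * f 1 0 * f 2 1 - f 0 2 * f 1 1 * f 2 0

def per3 (f : Fin 3 → Fin 3 → ℤ) : ℤ :=
  f 0 0 * f 1 1 * f 2 2 + f 0 0 * f 1 2 * f 2 1 + f 0 1 * f 1 0 * f 2 2
    + f 0 1 * f 1 2 * f 2 0 + f 0 2 * f 1 0 * f 2 1 + f 0 2 * f 1 1 * f 2 0

theorem gB_per : ∀ j, per3 (gB j) ≠ 0 := by decide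

theorem gadget : ∀ g : Fin 3 → Fin 3 → Bool,
    (Finset.univ.filter fun j : Fin 16 =>
      det3 (fun u v => (if g u v then 1 else -1) * gB j u v) ≠ 0).card ≤ 6 := by decide

end PermanentAux

open PermanentAux

theorem permanent_signed_determinants (n k : ℕ)
    (c : Fin k → ℝ) (S : Fin k → Matrix (Fin n) (Fin n) ℝ)
    (hS : ∀ i, ∀ u v, S i u v = 1 ∨ S i u v = -1)
    (h : Matrix.per (genericMatrix n) =
      ∑ i, C (c i) * (Matrix.of fun u v => C (S i u v) * genericMatrix n u v).det) :
    ((8 : ℝ) / 3) ^ (n / 3) ≤ (k : ℝ) := by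
  classical
  set m := n / 3 with hm
  set r := n % 3 with hr
  have hn3 : 3 * m + r = n := Nat.div_add_mod n 3
  let e : ((Fin 3 × Fin m) ⊕ Fin r) ≃ Fin n :=
    (Equiv.sumCongr finProdFinEquiv (Equiv.refl (Fin r))).trans
      (finSumFinEquiv.trans (finCongr hn3))
  let BR : Fin 16 → Matrix (Fin 3) (Fin 3) ℝ := fun j => Matrix.of fun u v => ((gB j u v : ℤ) : ℝ)
  let sB : Fin k → Fin m → Matrix (Fin 3) (Fin 3) ℝ := fun i b =>
    Matrix.of fun u v => S i (e (Sum.inl (u, b))) (e (Sum.inl (v, b)))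
  let blk : Fin k → Fin m → Fin 16 → Matrix (Fin 3) (Fin 3) ℝ := fun i b j =>
    Matrix.of fun u v => sB i b u v * BR j u v
  let P : Fin k → Fin m → Fin 16 → Prop := fun i b j => (blk i b j).det ≠ 0
  -- main existence step
  have key : ∀ t : Fin m → Fin 16, ∃ i, ∀ b, P i b (t b) := by
    intro t
    set N : Matrix ((Fin 3 × Fin m) ⊕ Fin r) ((Fin 3 × Fin m) ⊕ Fin r) ℝ :=
      Matrix.fromBlocks (Matrix.blockDiagonal fun b => BR (t b)) 0 0
        (1 : Matrix (Fin r) (Fin r) ℝ) with hN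
    set x : Fin n × Fin n → ℝ := fun p => N (e.symm p.1) (e.symm p.2) with hx
    have hev := congrArg (eval x) h
    have hL : eval x (Matrix.per (genericMatrix n)) = (N.submatrix e.symm e.symm).per := by
      rw [Matrix.per, Matrix.per, map_sum]
      refine Finset.sum_congr rfl fun σ _ => ?_
      rw [map_prod]
      refine Finset.prod_congr rfl fun u _ => ?_
      simp [genericMatrix, hx, Matrix.submatrix_apply]
    have hBRper : ∀ j, (BR j).per ≠ 0 := by
      intro j
      have hc : (BR j).per = ((per3 (gB j) : ℤ) : ℝ) := by
        rw [per_fin_three, per3]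
        push_cast
        simp [BR]
      rw [hc]
      exact_mod_cast gB_per j
    have hLne : eval x (Matrix.per (genericMatrix n)) ≠ 0 := by
      rw [hL, per_submatrix_equiv N e.symm, hN, per_fromBlocks_zero, per_blockDiagonal, per_one,
        mul_one]
      exact Finset.prod_ne_zero_iff.mpr fun b _ => hBRper (t b)
    have hR : eval x (∑ i, C (c i) * (Matrix.of fun u v => C (S i u v) * genericMatrix n u v).det)
        = ∑ i, c i * ((Matrix.of fun p q => S i (e p) (e q) * N p q).submatrix e.symm e.symm).det := by
      rw [map_sum]
      refine Finset.sum_congr rfl fun i _ => ?_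
      rw [map_mul, eval_C, RingHom.map_det]
      congr 2
      ext u v
      simp [genericMatrix, hx, Matrix.submatrix_apply, Matrix.map_apply]
    have hKi : ∀ i, (Matrix.of fun p q => S i (e p) (e q) * N p q) =
        Matrix.fromBlocks (Matrix.blockDiagonal fun b => blk i b (t b)) 0 0
          (Matrix.of fun p q : Fin r =>
            S i (e (Sum.inr p)) (e (Sum.inr q)) * (1 : Matrix (Fin r) (Fin r) ℝ) p q) := by
      intro i
      ext p q
      rcases p with ⟨pu, pb⟩ | p <;> rcases q with ⟨qu, qb⟩ | q
      · show S i _ _ * Matrix.blockDiagonal (fun b => BR (t b)) (pu, pb) (qu, qb) = _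
        rw [Matrix.fromBlocks_apply₁₁, Matrix.blockDiagonal_apply, Matrix.blockDiagonal_apply]
        split_ifs with hb
        · subst hb; simp [blk, sB]
        · exact mul_zero _
      · show S i _ _ * (0 : Matrix (Fin 3 × Fin m) (Fin r) ℝ) (pu, pb) q = _
        simp
      · show S i _ _ * (0 : Matrix (Fin r) (Fin 3 × Fin m) ℝ) p (qu, qb) = _
        simp
      · show S i _ _ * (1 : Matrix (Fin r) (Fin r) ℝ) p q = _
        simp [Matrix.fromBlocks_apply₂₂]
    obtain ⟨i, -, hi⟩ : ∃ i ∈ Finset.univ, c i *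
        ((Matrix.of fun p q => S i (e p) (e q) * N p q).submatrix e.symm e.symm).det ≠ 0 := by
      apply Finset.exists_ne_zero_of_sum_ne_zero
      rw [← hR, ← hev]
      exact hLne
    refine ⟨i, fun b => ?_⟩
    have hdet : ((Matrix.of fun p q => S i (e p) (e q) * N p q).submatrix e.symm e.symm).det
        = (∏ b', (blk i b' (t b')).det) *
          (Matrix.of fun p q : Fin r =>
            S i (e (Sum.inr p)) (e (Sum.inr q)) * (1 : Matrix (Fin r) (Fin r) ℝ) p q).det := by
      rw [Matrix.det_submatrix_equiv_self, hKi i, Matrix.det_fromBlocks_zero₂₁,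
        Matrix.det_blockDiagonal]
    have h2 : (∏ b', (blk i b' (t b')).det) ≠ 0 := by
      have := right_ne_zero_of_mul hi
      rw [hdet] at this
      exact left_ne_zero_of_mul this
    exact Finset.prod_ne_zero_iff.mp h2 b (Finset.mem_univ b)
  -- cardinality of good sets
  have hcard : ∀ i b, (Finset.univ.filter fun j => P i b j).card ≤ 6 := by
    intro i b
    set g : Fin 3 → Fin 3 → Bool := fun u v =>
      if S i (e (Sum.inl (u, b))) (e (Sum.inl (v, b))) = 1 then true else false with hg
    have hPiff : ∀ j, P i b j ↔
        det3 (fun u v => (if g u v then 1 else -1) * gB j u v) ≠ 0 := by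
      intro j
      have hsB : ∀ u v, sB i b u v = (((if g u v then 1 else -1 : ℤ) : ℤ) : ℝ) := by
        intro u v
        rcases hS i (e (Sum.inl (u, b))) (e (Sum.inl (v, b))) with h1 | h1 <;>
          norm_num [hg, sB, h1]
      have hcast : (blk i b j).det =
          ((det3 (fun u v => (if g u v then 1 else -1) * gB j u v) : ℤ) : ℝ) := by
        rw [Matrix.det_fin_three]
        simp only [blk, BR, Matrix.of_apply, hsB, PermanentAux.det3]
        push_cast
        ring
      show (blk i b j).det ≠ 0 ↔ _
      rw [hcast]
      exact not_congr (by exact_mod_cast Iff.rfl)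
    calc (Finset.univ.filter fun j => P i b j).card
        = (Finset.univ.filter fun j : Fin 16 =>
            det3 (fun u v => (if g u v then 1 else -1) * gB j u v) ≠ 0).card := by
          congr 1
          apply Finset.filter_congr
          intro j _
          exact hPiff j
      _ ≤ 6 := gadget g
  -- counting
  have big : (16 : ℕ) ^ m ≤ k * 6 ^ m := by
    let T : Fin k → Finset (Fin m → Fin 16) := fun i =>
      Finset.univ.filter fun t => ∀ b, P i b (t b)
    have cover : (Finset.univ : Finset (Fin m → Fin 16)) ⊆ Finset.univ.biUnion T := by
      intro t _
      obtain ⟨i, hi⟩ := key t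
      exact Finset.mem_biUnion.mpr ⟨i, Finset.mem_univ i,
        Finset.mem_filter.mpr ⟨Finset.mem_univ t, hi⟩⟩
    have hTcard : ∀ i, (T i).card ≤ 6 ^ m := by
      intro i
      have hpi : T i = Fintype.piFinset fun b => Finset.univ.filter fun j => P i b j := by
        ext t
        simp only [T, Finset.mem_filter, Finset.mem_univ, true_and, Fintype.mem_piFinset]
      rw [hpi, Fintype.card_piFinset]
      calc ∏ b, (Finset.univ.filter fun j => P i b j).card ≤ ∏ _b : Fin m, 6 :=
          Finset.prod_le_prod' fun b _ => hcard i b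
        _ = 6 ^ m := by simp
    calc (16 : ℕ) ^ m = (Finset.univ : Finset (Fin m → Fin 16)).card := by
          rw [Finset.card_univ, Fintype.card_fun, Fintype.card_fin, Fintype.card_fin]
      _ ≤ (Finset.univ.biUnion T).card := Finset.card_le_card cover
      _ ≤ ∑ i : Fin k, (T i).card := Finset.card_biUnion_le
      _ ≤ ∑ _i : Fin k, 6 ^ m := Finset.sum_le_sum fun i _ => hTcard i
      _ = k * 6 ^ m := by simp [Finset.sum_const, Finset.card_univ, mul_comm]
  have h83 : (8 : ℝ) / 3 = 16 / 6 := by norm_num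
  rw [h83, div_pow, div_le_iff₀ (by positivity)]
  calc (16 : ℝ) ^ m ≤ (k : ℝ) * 6 ^ m := by exact_mod_cast big
    _ = (k : ℝ) * 6 ^ m := rfl
end

section
/- Let G be a bipartite graph with parts U = {u_1,…,u_n} and V = {v_1,…,v_n}, with edge variables x_{ij} for edges u_i v_j. For every orientation D of G, there exists a sign matrix S_D ∈ {±1}^{n×n} such that the Pfaffian of the weighted skew-adjacency matrix A_D (with vertex order u_1,…,u_n,v_1,…,v_n) satisfies Pf(A_D) = (-1)^{n(n-1)/2} · det(S_D ∘ B_G), where B_G is the weighted biadjacency matrix of G and ∘ is the entrywise product. -/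
open MvPolynomial

/-- The Pfaffian of a `2n × 2n` matrix, defined as the sum over perfect matchings
of the index set (encoded by permutations `σ` with `σ(2i) < σ(2i+1)` and
`σ(0) < σ(2) < ⋯ < σ(2n-2)`) of the signed products of entries. -/
def Matrix.pf {R : Type*} [CommRing R] {n : ℕ} (A : Matrix (Fin (2 * n)) (Fin (2 * n)) R) : R :=
  ∑ σ ∈ Finset.univ.filter (fun σ : Equiv.Perm (Fin (2 * n)) =>
      (∀ i : Fin n, σ ⟨2 * i.1, by have := i.isLt; omega⟩ <
          σ ⟨2 * i.1 + 1, by have := i.isLt; omega⟩) ∧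
      (∀ i j : Fin n, i < j → σ ⟨2 * i.1, by have := i.isLt; omega⟩ <
          σ ⟨2 * j.1, by have := j.isLt; omega⟩)),
    (Equiv.Perm.sign σ : ℤ) •
      ∏ i : Fin n, A (σ ⟨2 * i.1, by have := i.isLt; omega⟩)
        (σ ⟨2 * i.1 + 1, by have := i.isLt; omega⟩)

/-- The weighted biadjacency matrix of the bipartite graph with parts
`{u₁,…,uₙ}` and `{v₁,…,vₙ}` and edge relation `E`: entry `(i,j)` is the edge
variable `x_{ij}` if `uᵢvⱼ` is an edge, and `0` otherwise. -/
noncomputable def biadj {n : ℕ} (E : Fin n → Fin n → Bool) :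
    Matrix (Fin n) (Fin n) (MvPolynomial (Fin n × Fin n) ℝ) := fun i j =>
  if E i j then X (i, j) else 0

/-- The weighted skew-adjacency matrix of the orientation `D` of the bipartite
graph with edge relation `E`, with vertex order `u₁,…,uₙ,v₁,…,vₙ`.  Here
`D i j = true` means the edge `uᵢvⱼ` is oriented from `uᵢ` to `vⱼ`. -/
noncomputable def skewAdj {n : ℕ} (E : Fin n → Fin n → Bool) (D : Fin n → Fin n → Bool) :
    Matrix (Fin (2 * n)) (Fin (2 * n)) (MvPolynomial (Fin n × Fin n) ℝ) := fun p q =>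
  if hp : (p : ℕ) < n then
    if hq : (q : ℕ) < n then 0
    else
      let i : Fin n := ⟨p, hp⟩
      let j : Fin n := ⟨(q : ℕ) - n, by have := q.isLt; omega⟩
      if E i j then (if D i j then X (i, j) else -X (i, j)) else 0
  else
    if hq : (q : ℕ) < n then
      let i : Fin n := ⟨q, hq⟩
      let j : Fin n := ⟨(p : ℕ) - n, by have := p.isLt; omega⟩
      if E i j then (if D i j then -X (i, j) else X (i, j)) else 0
    else 0


/-!
Every nonzero term of `Pf(A_D)` comes from a perfect matching all of whose edges join
`U = {0, …, n-1}` to `V = {n, …, 2n-1}`. In the normal form used by `Matrix.pf` such a matching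
is the permutation `2k ↦ u_k, 2k+1 ↦ v_{π k}` for a unique `π ∈ Sₙ`, and its sign is `sign π`
times the sign `ε` of the same permutation for `π = 1`. Hence `Pf(A_D) = ε · det(S ∘ B_G)`, where
`S_{ij} = ±1` records the orientation of `u_i v_j`; the sign `ε · (-1)^{n(n-1)/2}` is then absorbed
into the first row of `S`.
-/

open Equiv Equiv.Perm

namespace Fin

variable {n : ℕ}

def twoMul (i : Fin n) : Fin (2 * n) := ⟨2 * i, by omega⟩

def twoMulAddOne (i : Fin n) : Fin (2 * n) := ⟨2 * i + 1, by omega⟩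

end Fin

open Fin

def uVert {n : ℕ} (i : Fin n) : Fin (2 * n) := ⟨i, by omega⟩

def vVert {n : ℕ} (j : Fin n) : Fin (2 * n) := ⟨n + j, by omega⟩

noncomputable def interleaveEquiv (n : ℕ) : Fin n ⊕ Fin n ≃ Fin (2 * n) :=
  .ofBijective (Sum.elim twoMul twoMulAddOne) <| (Fintype.bijective_iff_injective_and_card _).2
    ⟨by rintro (a | a) (b | b) h <;> simp [twoMul, twoMulAddOne, Fin.ext_iff] at h ⊢ <;> omega,
      by simp [two_mul]⟩

noncomputable def halvesEquiv (n : ℕ) : Fin n ⊕ Fin n ≃ Fin (2 * n) :=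
  .ofBijective (Sum.elim uVert vVert) <| (Fintype.bijective_iff_injective_and_card _).2
    ⟨by rintro (a | a) (b | b) h <;> simp [uVert, vVert, Fin.ext_iff] at h ⊢ <;> omega,
      by simp [two_mul]⟩

noncomputable def matchingPerm {n : ℕ} (π : Perm (Fin n)) : Perm (Fin (2 * n)) :=
  (interleaveEquiv n).symm.trans ((Perm.sumCongr 1 π).trans (halvesEquiv n))

@[simp] lemma interleaveEquiv_inl {n : ℕ} (k : Fin n) :
    interleaveEquiv n (.inl k) = twoMul k := rfl

@[simp] lemma interleaveEquiv_inr {n : ℕ} (k : Fin n) :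
    interleaveEquiv n (.inr k) = twoMulAddOne k := rfl

section matchingPerm

variable {n : ℕ} (π : Perm (Fin n))

@[simp] lemma matchingPerm_twoMul (k : Fin n) : matchingPerm π (twoMul k) = uVert k := by
  simp [matchingPerm, ← interleaveEquiv_inl]; rfl

@[simp] lemma matchingPerm_twoMulAddOne (k : Fin n) :
    matchingPerm π (twoMulAddOne k) = vVert (π k) := by
  simp [matchingPerm, ← interleaveEquiv_inr]; rfl

lemma sign_matchingPerm :
    sign (matchingPerm π) = sign π * sign (matchingPerm (1 : Perm (Fin n))) := by
  have : matchingPerm π = (halvesEquiv n).permCongr (Perm.sumCongr 1 π) * matchingPerm 1 := by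
    ext p; simp [matchingPerm, Equiv.permCongr_apply]
  rw [this, map_mul, sign_permCongr, sign_sumCongr, map_one, one_mul]

lemma matchingPerm_injective : Function.Injective (matchingPerm (n := n)) := by
  intro π π' h
  ext k
  simpa [vVert] using congrArg Fin.val (congrFun (congrArg DFunLike.coe h) (twoMulAddOne k))

lemma exists_eq_matchingPerm {σ : Perm (Fin (2 * n))}
    (hmono : ∀ i j : Fin n, i < j → σ (twoMul i) < σ (twoMul j))
    (hcross : ∀ k, (σ (twoMul k) : ℕ) < n ∧ n ≤ σ (twoMulAddOne k)) :
    ∃ π : Perm (Fin n), σ = matchingPerm π := by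
  have hu (k : Fin n) : σ (twoMul k) = uVert k := by
    have hσu : StrictMono fun k : Fin n => (⟨σ (twoMul k), (hcross k).1⟩ : Fin n) :=
      fun i j h => hmono i j h
    simpa [uVert, Fin.ext_iff] using hσu.apply_eq (x := k)
  let b (k : Fin n) : Fin n := ⟨σ (twoMulAddOne k) - n, by have := (hcross k).2; omega⟩
  have hv (k : Fin n) : σ (twoMulAddOne k) = vVert (b k) := by
    have := (hcross k).2
    ext; simp only [vVert, b]; omega
  have hb : Function.Injective b := fun i j h => by
    have : twoMulAddOne i = twoMulAddOne j := σ.injective (by rw [hv, hv, h])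
    simpa [twoMulAddOne, Fin.ext_iff] using this
  refine ⟨.ofBijective b hb.bijective_of_finite, Equiv.ext fun p => ?_⟩
  obtain ⟨k | k, rfl⟩ := (interleaveEquiv n).surjective p
  · simpa using hu k
  · simpa using hv k

end matchingPerm

open Finset in
theorem Matrix.pf_eq_sign_smul_det_of_bipartite {R : Type*} [CommRing R] {n : ℕ}
    (A : Matrix (Fin (2 * n)) (Fin (2 * n)) R)
    (hA : ∀ p q : Fin (2 * n), p < q → ¬((p : ℕ) < n ∧ n ≤ q) → A p q = 0) :
    Matrix.pf A = (sign (matchingPerm (1 : Perm (Fin n))) : ℤ) •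
      (Matrix.of fun i j => A (uVert i) (vVert j)).det := by
  classical
  set B : Matrix (Fin n) (Fin n) R := .of fun i j => A (uVert i) (vVert j)
  set S := univ.filter fun σ : Perm (Fin (2 * n)) =>
      (∀ i : Fin n, σ (twoMul i) < σ (twoMulAddOne i)) ∧
      (∀ i j : Fin n, i < j → σ (twoMul i) < σ (twoMul j))
  let term (σ : Perm (Fin (2 * n))) : R :=
    (sign σ : ℤ) • ∏ i : Fin n, A (σ (twoMul i)) (σ (twoMulAddOne i))
  have hpf : Matrix.pf A = ∑ σ ∈ S, term σ := rfl
  have himage : univ.image matchingPerm ⊆ S := by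
    simp only [subset_iff, mem_image, mem_univ, true_and, S, mem_filter]
    rintro _ ⟨π, rfl⟩
    refine ⟨fun i => ?_, fun i j hij => ?_⟩
    · simp only [matchingPerm_twoMul, matchingPerm_twoMulAddOne, Fin.lt_def, uVert, vVert]
      omega
    · simpa only [matchingPerm_twoMul, Fin.lt_def, uVert] using hij
  have hvanish : ∀ σ ∈ S, σ ∉ univ.image matchingPerm → term σ = 0 := by
    intro σ hσ hnot
    rw [mem_filter] at hσ
    by_contra hne
    have hcross (k : Fin n) : (σ (twoMul k) : ℕ) < n ∧ n ≤ σ (twoMulAddOne k) := by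
      by_contra hk
      exact hne (smul_eq_zero_of_right _ (prod_eq_zero (mem_univ k) (hA _ _ (hσ.2.1 k) hk)))
    obtain ⟨π, rfl⟩ := exists_eq_matchingPerm hσ.2.2 hcross
    exact hnot (mem_image_of_mem _ (mem_univ π))
  rw [hpf, ← sum_subset himage hvanish, sum_image fun π _ π' _ h => matchingPerm_injective h,
    ← Matrix.det_transpose, Matrix.det_apply, smul_sum]
  refine sum_congr rfl fun π _ => ?_
  simp only [term, matchingPerm_twoMul, matchingPerm_twoMulAddOne, sign_matchingPerm π,
    Units.val_mul, mul_smul, Units.smul_def]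
  exact smul_comm _ _ _

def orientSign {n : ℕ} (D : Fin n → Fin n → Bool) : Matrix (Fin n) (Fin n) ℝ :=
  fun i j => if D i j then 1 else -1

lemma orientSign_eq_one_or_neg_one {n : ℕ} (D : Fin n → Fin n → Bool) (i j : Fin n) :
    orientSign D i j = 1 ∨ orientSign D i j = -1 := by
  unfold orientSign; split <;> simp

section skewAdj

variable {n : ℕ} (E D : Fin n → Fin n → Bool)

lemma skewAdj_uVert_vVert (i j : Fin n) :
    skewAdj E D (uVert i) (vVert j) = C (orientSign D i j) * biadj E i j := by
  have hj : n + (j : ℕ) - n = j := by omega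
  simp only [skewAdj, uVert, vVert, i.isLt, dif_pos, show ¬ n + (j : ℕ) < n by omega,
    hj, Fin.eta, orientSign, biadj]
  cases E i j <;> cases D i j <;> simp

lemma skewAdj_eq_zero_of_not_cross {p q : Fin (2 * n)} (hpq : p < q)
    (hcross : ¬((p : ℕ) < n ∧ n ≤ q)) : skewAdj E D p q = 0 := by
  rw [Fin.lt_def] at hpq
  by_cases hp : (p : ℕ) < n
  · simp [skewAdj, hp, show (q : ℕ) < n by omega]
  · simp [skewAdj, hp, show ¬ (q : ℕ) < n by omega]

lemma pf_skewAdj : Matrix.pf (skewAdj E D) = (sign (matchingPerm (1 : Perm (Fin n))) : ℤ) •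
    (Matrix.of fun i j => C (orientSign D i j) * biadj E i j).det := by
  rw [Matrix.pf_eq_sign_smul_det_of_bipartite _ fun _ _ => skewAdj_eq_zero_of_not_cross E D]
  simp only [skewAdj_uVert_vVert]

end skewAdj

lemma exists_signs_det_eq_smul {R σ : Type*} [CommRing R] {n : ℕ}
    (M : Matrix (Fin n) (Fin n) (MvPolynomial σ R)) (S : Matrix (Fin n) (Fin n) R)
    (hS : ∀ i j, S i j = 1 ∨ S i j = -1) (c : ℤˣ) (hc : n = 0 → c = 1) :
    ∃ S' : Matrix (Fin n) (Fin n) R, (∀ i j, S' i j = 1 ∨ S' i j = -1) ∧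
      (Matrix.of fun i j => C (S' i j) * M i j).det =
        (c : ℤ) • (Matrix.of fun i j => C (S i j) * M i j).det := by
  cases n with
  | zero => exact ⟨S, hS, by simp [hc rfl]⟩
  | succ n =>
    refine ⟨S.updateRow 0 ((c : R) • S 0), fun i j => ?_, ?_⟩
    · rcases eq_or_ne i 0 with rfl | hi
      · rcases Int.units_eq_one_or c with rfl | rfl <;> rcases hS 0 j with h | h <;> simp [h]
      · simpa [hi] using hS i j
    · set N : Matrix (Fin (n + 1)) (Fin (n + 1)) (MvPolynomial σ R) :=
        .of fun i j => C (S i j) * M i j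
      have hN : (Matrix.of fun i j => C (S.updateRow 0 ((c : R) • S 0) i j) * M i j) =
          N.updateRow 0 ((C (c : R) : MvPolynomial σ R) • N 0) := by
        ext i j
        rcases eq_or_ne i 0 with rfl | hi <;> simp [N, Matrix.updateRow_apply, *, mul_assoc]
      rw [hN, Matrix.det_updateRow_smul, Matrix.updateRow_eq_self, zsmul_eq_mul, map_intCast]

theorem bipartite_pf_eq_signed_det {n : ℕ} (E : Fin n → Fin n → Bool)
    (D : Fin n → Fin n → Bool) :
    ∃ S : Matrix (Fin n) (Fin n) ℝ,
      (∀ i j, S i j = 1 ∨ S i j = -1) ∧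
      Matrix.pf (skewAdj E D) =
        (-1 : MvPolynomial (Fin n × Fin n) ℝ) ^ (n * (n - 1) / 2) *
          (Matrix.of fun i j => C (S i j) * biadj E i j).det := by
  set k := n * (n - 1) / 2
  set ε := sign (matchingPerm (1 : Perm (Fin n)))
  have hε : n = 0 → ε * (-1) ^ k = 1 := by
    rintro rfl
    have : matchingPerm (1 : Perm (Fin 0)) = 1 := Equiv.ext fun p => (Nat.not_lt_zero _ p.2).elim
    simp [ε, k, this]
  obtain ⟨S, hS, hdet⟩ := exists_signs_det_eq_smul (biadj E) (orientSign D)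
    (orientSign_eq_one_or_neg_one D) (ε * (-1) ^ k) hε
  refine ⟨S, hS, ?_⟩
  rw [pf_skewAdj, hdet, zsmul_eq_mul, zsmul_eq_mul, ← mul_assoc]
  congr 1
  push_cast
  rw [mul_left_comm, ← pow_add, ← two_mul, pow_mul, neg_one_sq, one_pow, mul_one]
end
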